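/- Let n ≥ 1 and m ≥ 1, and let Q₁,…,Q_m ⊂ ℝⁿ be axis-parallel cubes such that ℓ(Q₁) = min_{1 ≤ k ≤ m} ℓ(Q_k). For each k let Q*_k := (100√n)Q_k and Q**_k := (100√n)² Q_k (concentric dilates). If ⋂_{k=1}^m Q*_k ≠ ∅, then there exists an axis-parallel cube G ⊂ ℝⁿ such that ⋂_{k=1}^m Q*_k ⊆ G, the concentric double 2G satisfies 2G ⊆ ⋂_{k=1}^m Q**_k, and |Q₁| ≤ |G| ≤ (100√n)ⁿ |Q₁|. -/

import Mathlib

/-!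
Take `G = Q₁*`. It contains the intersection, and since `Q₁*` meets every `Q_k*`, the double
`2Q₁*` lies in the cube concentric with `Q_k` of side `3ℓ(Q₁*) + ℓ(Q_k*) ≤ 4 · 100√n ℓ(Q_k)`,
which is inside `Q_k**` because `100√n ≥ 4`.
-/

open MeasureTheory ENNReal Real

noncomputable section

/-- The closed axis-parallel cube in ℝⁿ with center `z` and side length `ℓ`. -/
def cube (n : ℕ) (z : EuclideanSpace ℝ (Fin n)) (ℓ : ℝ) : Set (EuclideanSpace ℝ (Fin n)) :=
  {x | ∀ i, |x i - z i| ≤ ℓ / 2}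

lemma cube_eq_preimage_pi_Icc (n : ℕ) (z : EuclideanSpace ℝ (Fin n)) (ℓ : ℝ) :
    cube n z ℓ = (MeasurableEquiv.toLp 2 (Fin n → ℝ)).symm ⁻¹'
      Set.univ.pi fun i => Set.Icc (z i - ℓ / 2) (z i + ℓ / 2) := by
  ext x
  simp only [cube, Set.mem_ofPred_eq, Set.mem_preimage, Set.mem_univ_pi, Set.mem_Icc,
    MeasurableEquiv.coe_toLp_symm]
  exact forall_congr' fun i => by
    rw [abs_le]
    constructor <;> rintro ⟨h₁, h₂⟩ <;> constructor <;> linarith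

lemma volume_cube (n : ℕ) (z : EuclideanSpace ℝ (Fin n)) (ℓ : ℝ) :
    volume (cube n z ℓ) = ENNReal.ofReal ℓ ^ n := by
  rw [cube_eq_preimage_pi_Icc, (EuclideanSpace.volume_preserving_symm_measurableEquiv_toLp
    (Fin n)).measure_preimage (MeasurableSet.univ_pi fun _ => measurableSet_Icc).nullMeasurableSet,
    volume_pi_pi]
  simp

lemma cube_mono (n : ℕ) (z : EuclideanSpace ℝ (Fin n)) : Monotone (cube n z) :=
  fun _ _ h _ hx i => (hx i).trans (by linarith)

lemma cube_subset_cube_of_inter_nonempty {n : ℕ} {a b : EuclideanSpace ℝ (Fin n)} {r s : ℝ}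
    (h : (cube n a r ∩ cube n b s).Nonempty) (ℓ : ℝ) :
    cube n a ℓ ⊆ cube n b (ℓ + r + s) := by
  obtain ⟨p, hpa, hpb⟩ := h
  intro x hx i
  have hxa := abs_le.mp (hx i)
  have hpa := abs_le.mp (hpa i)
  have hpb := abs_le.mp (hpb i)
  rw [abs_le]
  constructor <;> linarith

theorem stmt8 (n m : ℕ) (hn : 1 ≤ n) (hm : 1 ≤ m)
    (z : Fin m → EuclideanSpace ℝ (Fin n)) (L : Fin m → ℝ) (hL : ∀ k, 0 < L k)
    (hmin : ∀ k, L ⟨0, by omega⟩ ≤ L k)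
    (hne : (⋂ k, cube n (z k) (100 * Real.sqrt n * L k)).Nonempty) :
    ∃ (w : EuclideanSpace ℝ (Fin n)) (t : ℝ), 0 < t ∧
      (⋂ k, cube n (z k) (100 * Real.sqrt n * L k)) ⊆ cube n w t ∧
      cube n w (2 * t) ⊆ (⋂ k, cube n (z k) ((100 * Real.sqrt n) ^ 2 * L k)) ∧
      volume (cube n (z ⟨0, by omega⟩) (L ⟨0, by omega⟩)) ≤ volume (cube n w t) ∧
      volume (cube n w t) ≤ ENNReal.ofReal ((100 * Real.sqrt n) ^ n) *
        volume (cube n (z ⟨0, by omega⟩) (L ⟨0, by omega⟩)) := by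
  set k₀ : Fin m := ⟨0, by omega⟩
  set c := 100 * Real.sqrt n
  have hc : 100 ≤ c := by
    have : 1 ≤ Real.sqrt n := Real.one_le_sqrt.mpr (by exact_mod_cast hn)
    linarith
  obtain ⟨p, hp⟩ := hne
  rw [Set.mem_iInter] at hp
  refine ⟨z k₀, c * L k₀, by nlinarith [hL k₀], Set.iInter_subset _ k₀, ?_, ?_, ?_⟩
  · refine Set.subset_iInter fun k =>
      (cube_subset_cube_of_inter_nonempty ⟨p, hp k₀, hp k⟩ _).trans (cube_mono _ _ ?_)
    have h4 : 3 * L k₀ + L k ≤ c * L k := by nlinarith [hmin k, hL k]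
    nlinarith [mul_le_mul_of_nonneg_left h4 (by linarith : (0 : ℝ) ≤ c)]
  · exact measure_mono (cube_mono _ _ (by nlinarith [hL k₀]))
  · rw [volume_cube, volume_cube, ENNReal.ofReal_mul (by linarith), mul_pow,
      ENNReal.ofReal_pow (by linarith)]
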